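/- arXiv:2602.16495 — 3 statements merged into one kernel-verified Lean document; each statement's English description precedes it below -/
import Mathlib

section
/- Let σ > 0, R > 0 and v_s ∈ ℝ. Define the Alcubierre shift field on ℝ³ \ {0} by V_i(x) = v_s · f_{σ,R}(|x|) · δ_{i1}. If the coordinate vorticity Ω_{ij} = (∂_j V_i − ∂_i V_j)/2 vanishes at every point of ℝ³ \ {0}, then v_s = 0; consequently V ≡ 0 and the extrinsic curvature K_{ij} = −(∂_i V_j + ∂_j V_i)/2 vanishes identically (the coordinate-vorticity-free Alcubierre warp drive is Minkowski). -/
open scoped BigOperators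

/-- Partial derivative `∂ᵢ f` on `ℝ³ = Fin 3 → ℝ`. -/
noncomputable def pd (i : Fin 3) (f : (Fin 3 → ℝ) → ℝ) (x : Fin 3 → ℝ) : ℝ :=
  fderiv ℝ f x (Pi.single i 1)

/-- Euclidean norm on `ℝ³`. -/
noncomputable def enorm3 (x : Fin 3 → ℝ) : ℝ := Real.sqrt (∑ i, x i ^ 2)

/-- The Alcubierre form function `f_{σ,R}`. -/
noncomputable def alcForm (σ R r : ℝ) : ℝ :=
  (Real.tanh (σ * (r + R)) - Real.tanh (σ * (r - R))) / (2 * Real.tanh (σ * R))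

/-!
The shift has a single component, `V₀ = vs · f(|x|)`, so `Ω₀₁ = ½ ∂₁V₀ = ½ vs f'(|x|) x₁/|x|`.
At `x = (0, R, 0)` this is `½ vs f'(R)`, and `f'(R) = -σ tanh²(2σR) / (2 tanh σR) ≠ 0` because the
second `tanh` term of `f'` vanishes at `r = R`. Hence `vs = 0`, so `V ≡ 0` and all its derivatives,
in particular the extrinsic curvature, vanish.
-/

namespace Real

theorem hasDerivAt_tanh (x : ℝ) : HasDerivAt tanh (1 - tanh x ^ 2) x := by
  have hcosh : cosh x ≠ 0 := (cosh_pos x).ne'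
  have h := (hasDerivAt_sinh x).div (hasDerivAt_cosh x) hcosh
  rw [show sinh / cosh = tanh from funext fun y => (tanh_eq_sinh_div_cosh y).symm] at h
  refine h.congr_deriv ?_
  rw [tanh_eq_sinh_div_cosh]
  field_simp

theorem tanh_pos {x : ℝ} (hx : 0 < x) : 0 < tanh x := by
  rw [tanh_eq_sinh_div_cosh]
  exact div_pos (sinh_pos_iff.mpr hx) (cosh_pos x)

end Real

theorem hasDerivAt_alcForm (σ R r : ℝ) :
    HasDerivAt (alcForm σ R)
      (σ * (Real.tanh (σ * (r - R)) ^ 2 - Real.tanh (σ * (r + R)) ^ 2) /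
        (2 * Real.tanh (σ * R))) r := by
  have hplus := (Real.hasDerivAt_tanh _).comp r (((hasDerivAt_id r).add_const R).const_mul σ)
  have hminus := (Real.hasDerivAt_tanh _).comp r (((hasDerivAt_id r).sub_const R).const_mul σ)
  refine ((hplus.sub hminus).div_const (2 * Real.tanh (σ * R))).congr_deriv ?_
  simp only [id_eq]
  ring

theorem hasDerivAt_alcForm_self (σ R : ℝ) :
    HasDerivAt (alcForm σ R)
      (-(σ * Real.tanh (2 * σ * R) ^ 2) / (2 * Real.tanh (σ * R))) R := by
  refine (hasDerivAt_alcForm σ R R).congr_deriv ?_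
  rw [sub_self, mul_zero, Real.tanh_zero, ← two_mul, mul_left_comm, ← mul_assoc]
  ring

theorem exists_hasDerivAt_alcForm_self_ne_zero {σ R : ℝ} (hσ : 0 < σ) (hR : 0 < R) :
    ∃ d ≠ 0, HasDerivAt (alcForm σ R) d R := by
  have hwall : 0 < Real.tanh (2 * σ * R) := Real.tanh_pos (by positivity)
  have hnormalizer : 0 < Real.tanh (σ * R) := Real.tanh_pos (by positivity)
  exact ⟨_, div_ne_zero (neg_ne_zero.mpr (by positivity)) (by positivity),
    hasDerivAt_alcForm_self σ R⟩

theorem hasFDerivAt_sum_sq {ι : Type*} [Fintype ι] (x : ι → ℝ) :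
    HasFDerivAt (fun y : ι → ℝ => ∑ i, y i ^ 2)
      (∑ i, (2 * x i) • ContinuousLinearMap.proj (R := ℝ) (φ := fun _ : ι => ℝ) i) x := by
  refine HasFDerivAt.fun_sum fun i _ => ?_
  simpa using (hasFDerivAt_apply (𝕜 := ℝ) i x).pow 2

theorem pd_comp_enorm3 {g : ℝ → ℝ} {g' : ℝ} {x : Fin 3 → ℝ} (hx : x ≠ 0)
    (hg : HasDerivAt g g' (enorm3 x)) (i : Fin 3) :
    pd i (g ∘ enorm3) x = g' * (x i / enorm3 x) := by
  have hsum_pos : 0 < ∑ j, x j ^ 2 := by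
    obtain ⟨j, hj⟩ := Function.ne_iff.mp hx
    exact Finset.sum_pos' (fun k _ => sq_nonneg (x k)) ⟨j, Finset.mem_univ j, sq_pos_of_ne_zero hj⟩
  have hnorm_pos : 0 < enorm3 x := Real.sqrt_pos.mpr hsum_pos
  have hnorm : HasFDerivAt enorm3 ((1 / (2 * enorm3 x)) •
      ∑ j, (2 * x j) • ContinuousLinearMap.proj (R := ℝ) (φ := fun _ : Fin 3 => ℝ) j) x :=
    (hasFDerivAt_sum_sq x).sqrt hsum_pos.ne'
  have hcomp : HasFDerivAt (g ∘ enorm3) _ x := hg.comp_hasFDerivAt x hnorm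
  rw [pd, hcomp.fderiv]
  simp only [smul_apply, sum_apply, ContinuousLinearMap.proj_apply, Pi.single_apply,
    smul_eq_mul, mul_ite, mul_one, mul_zero, Finset.sum_ite_eq', Finset.mem_univ, if_true]
  field_simp

/-- If the coordinate vorticity of the Alcubierre shift field vanishes on `ℝ³ \ {0}`,
then `v_s = 0`, the shift vanishes identically, and the extrinsic curvature vanishes
identically: the coordinate-vorticity-free Alcubierre warp drive is Minkowski. -/
theorem vorticity_free_alcubierre_is_minkowski
    (σ R vs : ℝ) (hσ : 0 < σ) (hR : 0 < R)
    (V : Fin 3 → (Fin 3 → ℝ) → ℝ)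
    (hV : ∀ (i : Fin 3) (x : Fin 3 → ℝ),
      V i x = vs * alcForm σ R (enorm3 x) * (if i = 0 then 1 else 0))
    (hΩ : ∀ x : Fin 3 → ℝ, x ≠ 0 →
      ∀ i j : Fin 3, (pd j (V i) x - pd i (V j) x) / 2 = 0) :
    vs = 0 ∧ (∀ (i : Fin 3) (x : Fin 3 → ℝ), V i x = 0) ∧
      (∀ (x : Fin 3 → ℝ) (i j : Fin 3),
        -(pd i (V j) x + pd j (V i) x) / 2 = 0) := by
  set x₀ : Fin 3 → ℝ := Pi.single 1 R
  have hx₀ : x₀ ≠ 0 := by simpa [x₀] using hR.ne'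
  have hx₀_norm : enorm3 x₀ = R := by
    simp [enorm3, x₀, Fin.sum_univ_three, Real.sqrt_sq hR.le]
  have hV₀ : V 0 = (fun r => vs * alcForm σ R r) ∘ enorm3 := funext fun x => by simp [hV]
  have hV₁ : V 1 = fun _ => 0 := funext fun x => by simp [hV]
  obtain ⟨d, hd, hf⟩ := exists_hasDerivAt_alcForm_self_ne_zero hσ hR
  have hprofile : HasDerivAt (fun r => vs * alcForm σ R r) (vs * d) (enorm3 x₀) :=
    hx₀_norm ▸ hf.const_mul vs
  have hshear : pd 1 (V 0) x₀ = vs * d := by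
    rw [hV₀, pd_comp_enorm3 hx₀ hprofile]
    simp [hx₀_norm, x₀, hR.ne']
  have hvs : vs = 0 := by
    have hΩ₀₁ := hΩ x₀ hx₀ 0 1
    rw [hshear, hV₁] at hΩ₀₁
    simpa [pd, hd] using hΩ₀₁
  have hV_eq_zero : ∀ i, V i = fun _ => 0 := fun i => funext fun x => by simp [hV, hvs]
  exact ⟨hvs, fun i x => by simp [hV_eq_zero], fun x i j => by simp [hV_eq_zero, pd]⟩
end

section
/- Let V = (V₁, V₂, V₃) be a C² vector field on ℝ³ with compact support. Then ∫_{ℝ³} [ (∑_i ∂_i V_i)² − ∑_{i,j} ∂_i V_j · (∂_i V_j + ∂_j V_i)/2 ] dx = − ∫_{ℝ³} ∑_{i,j} Ω_{ij} Ω_{ij} dx ≤ 0, where Ω_{ij} = (∂_j V_i − ∂_i V_j)/2; the integral is zero if and only if Ω ≡ 0. Consequently, the total Eulerian energy E_tot = (1/16πG) ∫ [ (div V)² − ∑_{i,j} ∂_i V_j ∂_{(i} V_{j)} ] dx of an R-Warp model with compactly supported shift is nonpositive, and vanishes exactly when the coordinate vorticity vanishes identically. -/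
/-!
Pointwise, the integrand equals `∑ᵢⱼ (∂ᵢVᵢ ∂ⱼVⱼ - ∂ⱼVᵢ ∂ᵢVⱼ) - ∑ᵢⱼ Ωᵢⱼ²`. The first sum is a null
Lagrangian: integrating by parts twice and using the symmetry of second derivatives,
`∫ ∂ᵢVᵢ ∂ⱼVⱼ = ∫ ∂ⱼVᵢ ∂ᵢVⱼ` for compactly supported `V`. So the integral is `-∫ ∑ᵢⱼ Ωᵢⱼ²`, which
is nonpositive and, `Ω` being continuous, vanishes only when `Ω ≡ 0`.
-/

open scoped BigOperators
open MeasureTheory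

section Directional

variable {E F : Type*} [NormedAddCommGroup E] [NormedSpace ℝ E]
  [NormedAddCommGroup F] [NormedSpace ℝ F]

theorem ContDiff.fderiv_apply_const {n : WithTop ℕ∞} {f : E → F} (hf : ContDiff ℝ (n + 1) f)
    (v : E) : ContDiff ℝ n fun x => fderiv ℝ f x v :=
  (hf.fderiv_right le_rfl).clm_apply contDiff_const

theorem ContDiff.continuous_fderiv_apply_const {n : WithTop ℕ∞} {f : E → F} (hf : ContDiff ℝ n f)
    (hn : n ≠ 0) (v : E) : Continuous fun x => fderiv ℝ f x v :=
  (hf.continuous_fderiv hn).clm_apply continuous_const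

theorem ContDiff.fderiv_fderiv_apply_comm {f : E → F} (hf : ContDiff ℝ 2 f) (x v w : E) :
    fderiv ℝ (fun y => fderiv ℝ f y w) x v = fderiv ℝ (fun y => fderiv ℝ f y v) x w := by
  have hdiff : DifferentiableAt ℝ (fderiv ℝ f) x :=
    (hf.fderiv_right (m := 1) le_rfl).differentiable one_ne_zero x
  rw [fderiv_clm_apply hdiff (differentiableAt_const w),
    fderiv_clm_apply hdiff (differentiableAt_const v)]
  simpa using ((hf.contDiffAt (x := x)).isSymmSndFDerivAt (by simp)).eq v w

end Directional

section Integral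

variable {E : Type*} [NormedAddCommGroup E] [NormedSpace ℝ E] [MeasurableSpace E] [BorelSpace E]
  {μ : Measure E}

section Integrability

variable [IsFiniteMeasureOnCompacts μ]

theorem HasCompactSupport.integrable_fderiv_mul {f g : E → ℝ} (hfs : HasCompactSupport f)
    (hf : ContDiff ℝ 1 f) (hg : Continuous g) (v : E) :
    Integrable (fun x => fderiv ℝ f x v * g x) μ :=
  ((hf.continuous_fderiv_apply_const one_ne_zero v).mul hg).integrable_of_hasCompactSupport
    (hfs.fderiv_apply ℝ v).mul_right

theorem HasCompactSupport.integrable_fderiv_mul_fderiv {f g : E → ℝ} (hfs : HasCompactSupport f)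
    (hf : ContDiff ℝ 1 f) (hg : ContDiff ℝ 1 g) (v w : E) :
    Integrable (fun x => fderiv ℝ f x v * fderiv ℝ g x w) μ :=
  hfs.integrable_fderiv_mul hf (hg.continuous_fderiv_apply_const one_ne_zero w) v

theorem integrable_sum_fderiv_mul_fderiv_sub {ι : Type*} [Fintype ι] {f : ι → E → ℝ}
    (hf : ∀ i, ContDiff ℝ 1 (f i)) (hfs : ∀ i, HasCompactSupport (f i)) (e : ι → E) :
    Integrable (fun x => ∑ i, ∑ j, (fderiv ℝ (f i) x (e i) * fderiv ℝ (f j) x (e j)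
      - fderiv ℝ (f i) x (e j) * fderiv ℝ (f j) x (e i))) μ :=
  integrable_finsetSum _ fun i _ => integrable_finsetSum _ fun j _ =>
    ((hfs i).integrable_fderiv_mul_fderiv (hf i) (hf j) _ _).sub
      ((hfs i).integrable_fderiv_mul_fderiv (hf i) (hf j) _ _)

end Integrability

section IntegrationByParts

variable [FiniteDimensional ℝ E] [μ.IsAddHaarMeasure]

theorem integral_fderiv_mul_eq_neg_mul_fderiv {f g : E → ℝ} (hf : ContDiff ℝ 1 f)
    (hg : ContDiff ℝ 1 g) (hfs : HasCompactSupport f) (v : E) :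
    ∫ x, fderiv ℝ f x v * g x ∂μ = -∫ x, f x * fderiv ℝ g x v ∂μ := by
  rw [integral_mul_fderiv_eq_neg_fderiv_mul_of_integrable
    (hfs.integrable_fderiv_mul hf hg.continuous v)
    ((hf.continuous.mul (hg.continuous_fderiv_apply_const one_ne_zero v))
      |>.integrable_of_hasCompactSupport hfs.mul_right)
    ((hf.continuous.mul hg.continuous).integrable_of_hasCompactSupport hfs.mul_right)
    (fun x _ => hf.differentiable one_ne_zero x) (fun x _ => hg.differentiable one_ne_zero x),
    neg_neg]

theorem integral_fderiv_mul_fderiv_comm {f g : E → ℝ} (hf : ContDiff ℝ 1 f)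
    (hg : ContDiff ℝ 2 g) (hfs : HasCompactSupport f) (v w : E) :
    ∫ x, fderiv ℝ f x v * fderiv ℝ g x w ∂μ = ∫ x, fderiv ℝ f x w * fderiv ℝ g x v ∂μ := by
  rw [integral_fderiv_mul_eq_neg_mul_fderiv hf (hg.fderiv_apply_const w) hfs,
    integral_fderiv_mul_eq_neg_mul_fderiv hf (hg.fderiv_apply_const v) hfs]
  simp only [hg.fderiv_fderiv_apply_comm]

theorem integral_sum_fderiv_mul_fderiv_sub_eq_zero {ι : Type*} [Fintype ι] {f : ι → E → ℝ}
    (hf : ∀ i, ContDiff ℝ 2 (f i)) (hfs : ∀ i, HasCompactSupport (f i)) (e : ι → E) :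
    ∫ x, ∑ i, ∑ j, (fderiv ℝ (f i) x (e i) * fderiv ℝ (f j) x (e j)
      - fderiv ℝ (f i) x (e j) * fderiv ℝ (f j) x (e i)) ∂μ = 0 := by
  have hf₁ i : ContDiff ℝ 1 (f i) := (hf i).of_le one_le_two
  have hint i j := (hfs i).integrable_fderiv_mul_fderiv (μ := μ) (hf₁ i) (hf₁ j)
  refine (integral_finsetSum _ fun i _ => ?_).trans (Finset.sum_eq_zero fun i _ => ?_)
  · exact integrable_finsetSum _ fun j _ => (hint i j _ _).sub (hint i j _ _)
  refine (integral_finsetSum _ fun j _ => ?_).trans (Finset.sum_eq_zero fun j _ => ?_)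
  · exact (hint i j _ _).sub (hint i j _ _)
  rw [integral_sub (hint i j _ _) (hint i j _ _),
    integral_fderiv_mul_fderiv_comm (hf₁ i) (hf j) (hfs i), sub_self]

end IntegrationByParts

end Integral

theorem sq_sum_diag_sub_sum_mul_symm_eq {ι : Type*} [Fintype ι] (A : ι → ι → ℝ) :
    (∑ i, A i i) ^ 2 - ∑ i, ∑ j, A i j * ((A i j + A j i) / 2)
      = ∑ i, ∑ j, (A i i * A j j - A j i * A i j) - ∑ i, ∑ j, ((A j i - A i j) / 2) ^ 2 := by
  have hswap : ∑ i, ∑ j, A j i ^ 2 = ∑ i, ∑ j, A i j ^ 2 := Finset.sum_comm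
  have hsplit i j : A i j * ((A i j + A j i) / 2)
      = ((A j i - A i j) / 2) ^ 2 + A j i * A i j + (A i j ^ 2 - A j i ^ 2) / 4 := by ring
  simp only [hsplit, Finset.sum_add_distrib, ← Finset.sum_div, Finset.sum_sub_distrib, hswap,
    sq (∑ i, A i i), Finset.sum_mul_sum]
  ring

theorem sum_sum_sq_eq_zero_iff {R ι κ : Type*} [Ring R] [LinearOrder R] [IsStrictOrderedRing R]
    [Fintype ι] [Fintype κ] (a : ι → κ → R) :
    ∑ i, ∑ j, a i j ^ 2 = 0 ↔ ∀ i j, a i j = 0 := by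
  simp [Fintype.sum_eq_zero_iff_of_nonneg, Pi.le_def, sq_nonneg, Finset.sum_nonneg, funext_iff]

theorem Continuous.integral_eq_zero_iff_of_nonneg {X : Type*} [TopologicalSpace X]
    [MeasurableSpace X] {μ : Measure X} [μ.IsOpenPosMeasure] {f : X → ℝ} (hf : Continuous f)
    (hfi : Integrable f μ) (hf₀ : 0 ≤ f) : ∫ x, f x ∂μ = 0 ↔ ∀ x, f x = 0 :=
  ⟨fun h x => by_contra fun hx => (integral_pos_of_integrable_nonneg_nonzero hf hfi hf₀ hx).ne' h,
    fun h => by simp [h]⟩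

noncomputable def vorticity (V : Fin 3 → (Fin 3 → ℝ) → ℝ) (i j : Fin 3) (x : Fin 3 → ℝ) : ℝ :=
  (pd j (V i) x - pd i (V j) x) / 2

section Vorticity

variable {V : Fin 3 → (Fin 3 → ℝ) → ℝ}

theorem continuous_vorticity (hV : ∀ i, ContDiff ℝ 1 (V i)) (i j : Fin 3) :
    Continuous (vorticity V i j) :=
  (((hV i).continuous_fderiv_apply_const one_ne_zero _).sub
    ((hV j).continuous_fderiv_apply_const one_ne_zero _)).div_const 2

theorem hasCompactSupport_vorticity (hsupp : ∀ i, HasCompactSupport (V i)) (i j : Fin 3) :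
    HasCompactSupport (vorticity V i j) :=
  ((hsupp i).fderiv_apply ℝ _).comp₂_left ((hsupp j).fderiv_apply ℝ _)
    (m := fun a b => (a - b) / 2) (by norm_num)

theorem integrable_sum_vorticity_sq (hV : ∀ i, ContDiff ℝ 1 (V i))
    (hsupp : ∀ i, HasCompactSupport (V i)) :
    Integrable fun x => ∑ i, ∑ j, vorticity V i j x ^ 2 :=
  integrable_finsetSum _ fun i _ => integrable_finsetSum _ fun j _ =>
    ((continuous_vorticity hV i j).pow 2).integrable_of_hasCompactSupport
      ((hasCompactSupport_vorticity hsupp i j).comp_left (zero_pow two_ne_zero))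

theorem integral_energy_eq_neg_integral_sum_vorticity_sq (hV : ∀ i, ContDiff ℝ 2 (V i))
    (hsupp : ∀ i, HasCompactSupport (V i)) :
    ∫ x, ((∑ i, pd i (V i) x) ^ 2
        - ∑ i, ∑ j, pd i (V j) x * ((pd i (V j) x + pd j (V i) x) / 2))
      = -∫ x, ∑ i, ∑ j, vorticity V i j x ^ 2 := by
  have hV₁ i : ContDiff ℝ 1 (V i) := (hV i).of_le one_le_two
  have hpt x := sq_sum_diag_sub_sum_mul_symm_eq fun i j => pd i (V j) x
  simp only [hpt]
  refine (integral_sub (integrable_sum_fderiv_mul_fderiv_sub hV₁ hsupp (Pi.single · 1))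
    (integrable_sum_vorticity_sq hV₁ hsupp)).trans ?_
  rw [integral_sum_fderiv_mul_fderiv_sub_eq_zero hV hsupp, zero_sub]

theorem integral_sum_vorticity_sq_eq_zero_iff (hV : ∀ i, ContDiff ℝ 1 (V i))
    (hsupp : ∀ i, HasCompactSupport (V i)) :
    ∫ x, ∑ i, ∑ j, vorticity V i j x ^ 2 = 0 ↔ ∀ x i j, vorticity V i j x = 0 := by
  have hΩ := continuous_vorticity hV
  rw [Continuous.integral_eq_zero_iff_of_nonneg (by fun_prop)
    (integrable_sum_vorticity_sq hV hsupp) (fun x => by positivity)]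
  simp only [sum_sum_sq_eq_zero_iff]

end Vorticity

/-- For a C² compactly supported vector field `V` on `ℝ³`,
`∫ [(div V)² - ∑ ∂ᵢVⱼ ∂₍ᵢVⱼ₎] = -∫ ∑ Ω_{ij}Ω_{ij} ≤ 0`, with equality iff the
coordinate vorticity `Ω` vanishes identically; consequently the total Eulerian
energy `E_tot = (1/16πG) ∫ [(div V)² - ∑ ∂ᵢVⱼ ∂₍ᵢVⱼ₎]` of an R-Warp model with
compactly supported shift is nonpositive, and vanishes exactly when `Ω ≡ 0`. -/
theorem total_eulerian_energy_nonpositive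
    (G : ℝ) (hG : 0 < G)
    (V : Fin 3 → (Fin 3 → ℝ) → ℝ)
    (hV : ∀ i, ContDiff ℝ 2 (V i)) (hsupp : ∀ i, HasCompactSupport (V i)) :
    ((∫ x : Fin 3 → ℝ, ((∑ i, pd i (V i) x) ^ 2
        - ∑ i, ∑ j, pd i (V j) x * ((pd i (V j) x + pd j (V i) x) / 2)))
      = - ∫ x : Fin 3 → ℝ, ∑ i, ∑ j, ((pd j (V i) x - pd i (V j) x) / 2) ^ 2)
    ∧ ((∫ x : Fin 3 → ℝ, ((∑ i, pd i (V i) x) ^ 2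
        - ∑ i, ∑ j, pd i (V j) x * ((pd i (V j) x + pd j (V i) x) / 2))) ≤ 0)
    ∧ ((∫ x : Fin 3 → ℝ, ((∑ i, pd i (V i) x) ^ 2
        - ∑ i, ∑ j, pd i (V j) x * ((pd i (V j) x + pd j (V i) x) / 2)) = 0)
        ↔ ∀ (x : Fin 3 → ℝ) (i j : Fin 3), (pd j (V i) x - pd i (V j) x) / 2 = 0)
    ∧ ((1 / (16 * Real.pi * G)) * (∫ x : Fin 3 → ℝ, ((∑ i, pd i (V i) x) ^ 2
        - ∑ i, ∑ j, pd i (V j) x * ((pd i (V j) x + pd j (V i) x) / 2))) ≤ 0)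
    ∧ (((1 / (16 * Real.pi * G)) * (∫ x : Fin 3 → ℝ, ((∑ i, pd i (V i) x) ^ 2
        - ∑ i, ∑ j, pd i (V j) x * ((pd i (V j) x + pd j (V i) x) / 2))) = 0)
        ↔ ∀ (x : Fin 3 → ℝ) (i j : Fin 3), (pd j (V i) x - pd i (V j) x) / 2 = 0) := by
  have hV₁ i : ContDiff ℝ 1 (V i) := (hV i).of_le one_le_two
  have hΩ_nonneg : 0 ≤ ∫ x, ∑ i, ∑ j, vorticity V i j x ^ 2 :=
    integral_nonneg fun x => by positivity
  have hΩ_zero := integral_sum_vorticity_sq_eq_zero_iff hV₁ hsupp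
  have hc : 0 < 1 / (16 * Real.pi * G) := by positivity
  rw [integral_energy_eq_neg_integral_sum_vorticity_sq hV hsupp]
  refine ⟨rfl, neg_nonpos.2 hΩ_nonneg, neg_eq_zero.trans hΩ_zero,
    mul_nonpos_of_nonneg_of_nonpos hc.le (neg_nonpos.2 hΩ_nonneg), ?_⟩
  rw [mul_eq_zero, or_iff_right hc.ne', neg_eq_zero]
  exact hΩ_zero
end

section
/- Let 0 < R₁ < R₂, let ρ > 0 and let G, M > 0 satisfy 0 < 2GM/R₂ < 1. Suppose P, a : [R₁, R₂] → ℝ are differentiable with ρ + P(r) > 0 on [R₁, R₂], satisfy the TOV equation P'(r) = −(ρ + P(r))·a'(r), and obey the boundary (junction) conditions a(R₁) = 0, P(R₂) = 0, and e^{2a(R₂)} = 1 − 2GM/R₂. Then P(R₁) = ρ·(√(1 − 2GM/R₂) − 1) < 0; in particular the pressure at the inner radius of the shell is strictly negative, contradicting the assumption of a positive isotropic pressure. -/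
/-! The TOV equation says exactly that `(ρ + P) · e^a` has zero derivative, so this quantity
takes the same value on both boundaries of the shell: `ρ + P(R₁)` at the inner one, where
`a = 0`, and `ρ · e^{a(R₂)} = ρ √(1 - 2GM/R₂)` at the outer one, where `P = 0`. Since
`GM > 0`, the square root is below `1`, which forces `P(R₁) < 0`. -/

open Set

theorem hasDerivWithinAt_add_mul_exp_of_tov {ρ : ℝ} {P a : ℝ → ℝ} {P' a' : ℝ} {s : Set ℝ}
    {r : ℝ} (hP : HasDerivWithinAt P P' s r) (ha : HasDerivWithinAt a a' s r)
    (hTOV : P' = -(ρ + P r) * a') :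
    HasDerivWithinAt (fun x => (ρ + P x) * Real.exp (a x)) 0 s r := by
  have h := (hP.const_add ρ).mul ha.exp
  rwa [hTOV, show -(ρ + P r) * a' * Real.exp (a r) + (ρ + P r) * (Real.exp (a r) * a') = 0 by
    ring] at h

theorem eq_of_hasDerivWithinAt_zero_Icc {f : ℝ → ℝ} {x y : ℝ} (hxy : x < y)
    (hf : ∀ r ∈ Icc x y, HasDerivWithinAt f 0 (Icc x y) r) : f y = f x :=
  constant_of_derivWithin_zero (fun r hr => (hf r hr).differentiableWithinAt)
    (fun r hr => (hf r (Ico_subset_Icc_self hr)).derivWithin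
      (uniqueDiffOn_Icc hxy r (Ico_subset_Icc_self hr)))
    y (right_mem_Icc.2 hxy.le)

theorem Real.exp_eq_sqrt_of_exp_two_mul_eq {x y : ℝ} (h : Real.exp (2 * x) = y) :
    Real.exp x = √y := by
  rw [← h, ← Real.exp_half, mul_div_cancel_left₀ x two_ne_zero]

theorem Real.sqrt_one_sub_lt_one {x : ℝ} (hx : 0 < x) : √(1 - x) < 1 :=
  (Real.sqrt_lt' one_pos).2 (by linarith)

theorem tov_shell_negative_inner_pressure_general
    (R₁ R₂ ρ G M : ℝ) (h1 : 0 < R₁) (h12 : R₁ < R₂)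
    (hρ : 0 < ρ) (hG : 0 < G) (hM : 0 < M)
    (P a P' a' : ℝ → ℝ)
    (hP : ∀ r ∈ Set.Icc R₁ R₂, HasDerivWithinAt P (P' r) (Set.Icc R₁ R₂) r)
    (ha : ∀ r ∈ Set.Icc R₁ R₂, HasDerivWithinAt a (a' r) (Set.Icc R₁ R₂) r)
    (hTOV : ∀ r ∈ Set.Icc R₁ R₂, P' r = -(ρ + P r) * a' r)
    (ha1 : a R₁ = 0) (hP2 : P R₂ = 0)
    (ha2 : Real.exp (2 * a R₂) = 1 - 2 * G * M / R₂) :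
    P R₁ = ρ * (Real.sqrt (1 - 2 * G * M / R₂) - 1) ∧ P R₁ < 0 := by
  have hconserved := eq_of_hasDerivWithinAt_zero_Icc h12 fun r hr =>
    hasDerivWithinAt_add_mul_exp_of_tov (hP r hr) (ha r hr) (hTOV r hr)
  simp only [hP2, ha1, Real.exp_eq_sqrt_of_exp_two_mul_eq ha2, add_zero, Real.exp_zero,
    mul_one] at hconserved
  have hPR₁ : P R₁ = ρ * (Real.sqrt (1 - 2 * G * M / R₂) - 1) := by linarith
  have hsqrt : Real.sqrt (1 - 2 * G * M / R₂) < 1 :=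
    Real.sqrt_one_sub_lt_one (by have := h1.trans h12; positivity)
  exact ⟨hPR₁, hPR₁ ▸ mul_neg_of_pos_of_neg hρ (by linarith)⟩

/-- A constant-density shell obeying the TOV equation with Minkowski interior
(`a(R₁) = 0`), vanishing surface pressure (`P(R₂) = 0`), and Schwarzschild exterior
(`e^{2a(R₂)} = 1 - 2GM/R₂`) must have strictly negative pressure at its inner radius:
`P(R₁) = ρ(√(1 - 2GM/R₂) - 1) < 0`, contradicting a positive isotropic pressure. -/
theorem tov_shell_negative_inner_pressure
    (R₁ R₂ ρ G M : ℝ) (h1 : 0 < R₁) (h12 : R₁ < R₂)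
    (hρ : 0 < ρ) (hG : 0 < G) (hM : 0 < M)
    (hcompact : 2 * G * M / R₂ < 1)
    (P a P' a' : ℝ → ℝ)
    (hP : ∀ r ∈ Set.Icc R₁ R₂, HasDerivWithinAt P (P' r) (Set.Icc R₁ R₂) r)
    (ha : ∀ r ∈ Set.Icc R₁ R₂, HasDerivWithinAt a (a' r) (Set.Icc R₁ R₂) r)
    (hpos : ∀ r ∈ Set.Icc R₁ R₂, 0 < ρ + P r)
    (hTOV : ∀ r ∈ Set.Icc R₁ R₂, P' r = -(ρ + P r) * a' r)
    (ha1 : a R₁ = 0) (hP2 : P R₂ = 0)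
    (ha2 : Real.exp (2 * a R₂) = 1 - 2 * G * M / R₂) :
    P R₁ = ρ * (Real.sqrt (1 - 2 * G * M / R₂) - 1) ∧ P R₁ < 0 :=
  tov_shell_negative_inner_pressure_general R₁ R₂ ρ G M h1 h12 hρ hG hM P a P' a' hP ha hTOV ha1 hP2
    ha2
end
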